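/- arXiv:1306.0881 — 3 statements merged into one kernel-verified Lean document; each statement's English description precedes it below -/
import Mathlib

section
/- Fix $m \le n$, real numbers $\theta_{ij}$ for $i \in \{1,\dots,m\}$, $j \in \{m+1,\dots,n\}$, a symmetric real $m \times m$ matrix $(q_{ij})$, and $\lambda \in \mathbb{R}$. Define the $n \times n$ complex matrix $\mathcal{A}(k)$ for $k > 0$ by: $\mathcal{A}_{ij} = ik\,\delta_{ij} - \lambda q_{ij}$ for $i,j \le m$; $\mathcal{A}_{ij} = ik\,\theta_{ij}$ for $i \le m < j$; $\mathcal{A}_{ij} = -\theta_{ji}$ for $j \le m < i$; $\mathcal{A}_{ij} = \delta_{ij}$ for $i,j > m$. Then $\det \mathcal{A}(k) \ne 0$ for every $k > 0$. -/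
/-!
Splitting `Fin n` as `Fin m ⊕ Fin (n - m)` puts `𝒜(k)` in block form with an identity block in
the lower right corner, and since `θ` is real its Schur complement gives
`det 𝒜(k) = det (i k (1 + Θ Θᴴ) - λ Q)`. For a kernel vector `v` of the latter,
`vᴴ (λ Q) v` is real because `Q` is Hermitian, while `vᴴ (i k (1 + Θ Θᴴ)) v` has imaginary part
`k vᴴ (1 + Θ Θᴴ) v > 0`; so no such `v ≠ 0` exists.
-/

/-- The coefficient matrix `𝒜(k)` of the linear system determining the on-shell
scattering amplitudes of the limit operator on the star graph:
`𝒜ᵢⱼ = ik δᵢⱼ - λ qᵢⱼ` for `i,j ≤ m`; `𝒜ᵢⱼ = ik θᵢⱼ` for `i ≤ m < j`;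
`𝒜ᵢⱼ = -θⱼᵢ` for `j ≤ m < i`; `𝒜ᵢⱼ = δᵢⱼ` for `i,j > m`. -/
def scatA (m n : ℕ) (θ : Fin m → Fin n → ℝ) (q : Matrix (Fin m) (Fin m) ℝ)
    (lam k : ℝ) : Matrix (Fin n) (Fin n) ℂ :=
  Matrix.of fun i j =>
    if hi : (i : ℕ) < m then
      if hj : (j : ℕ) < m then
        Complex.I * k * (if i = j then 1 else 0) - (lam : ℂ) * (q ⟨i, hi⟩ ⟨j, hj⟩ : ℝ)
      else Complex.I * k * (θ ⟨i, hi⟩ j : ℝ)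
    else
      if hj : (j : ℕ) < m then -((θ ⟨j, hj⟩ i : ℝ) : ℂ)
      else if i = j then 1 else 0

open scoped ComplexOrder

namespace Matrix

variable {ι : Type*} [Fintype ι] [DecidableEq ι]

theorem det_isHermitian_add_I_smul_posDef_ne_zero {H N : Matrix ι ι ℂ} (hH : H.IsHermitian)
    (hN : N.PosDef) : (H + Complex.I • N).det ≠ 0 := by
  intro hdet
  obtain ⟨v, hv, hHNv⟩ := exists_mulVec_eq_zero_iff.mpr hdet
  have hform : star v ⬝ᵥ H *ᵥ v + Complex.I * (star v ⬝ᵥ N *ᵥ v) = 0 := by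
    rw [← smul_eq_mul, ← dotProduct_smul, ← smul_mulVec, ← dotProduct_add, ← add_mulVec, hHNv,
      dotProduct_zero]
  have him := congrArg Complex.im hform
  have hHim : (star v ⬝ᵥ H *ᵥ v).im = 0 := hH.im_star_dotProduct_mulVec_self v
  have hNre : 0 < (star v ⬝ᵥ N *ᵥ v).re := hN.re_dotProduct_pos hv
  simp only [Complex.add_im, Complex.mul_im, Complex.I_re, Complex.I_im, Complex.zero_im, hHim]
    at him
  linarith

end Matrix

open Matrix

theorem scatA_submatrix_finSumFinEquiv (m p : ℕ) (θ : Fin m → Fin (m + p) → ℝ)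
    (q : Matrix (Fin m) (Fin m) ℝ) (lam k : ℝ) :
    (scatA m (m + p) θ q lam k).submatrix finSumFinEquiv finSumFinEquiv =
      let Θ : Matrix (Fin m) (Fin p) ℂ := (of fun i j => θ i (Fin.natAdd m j)).map (↑)
      fromBlocks ((Complex.I * k) • 1 - (lam : ℂ) • q.map (↑)) ((Complex.I * k) • Θ) (-Θᴴ) 1 := by
  ext (i | i) (j | j) <;> simp [scatA, one_apply]

/-- `det 𝒜(k) ≠ 0` for every `k > 0`. -/
theorem stmt_10 (m n : ℕ) (hmn : m ≤ n) (θ : Fin m → Fin n → ℝ)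
    (q : Matrix (Fin m) (Fin m) ℝ) (hq : q.IsSymm) (lam : ℝ)
    (k : ℝ) (hk : 0 < k) :
    (scatA m n θ q lam k).det ≠ 0 := by
  obtain ⟨p, rfl⟩ := Nat.exists_eq_add_of_le hmn
  rw [← det_submatrix_equiv_self finSumFinEquiv, scatA_submatrix_finSumFinEquiv,
    det_fromBlocks_one₂₂]
  set Θ : Matrix (Fin m) (Fin p) ℂ := (of fun i j => θ i (Fin.natAdd m j)).map (↑)
  set Q : Matrix (Fin m) (Fin m) ℂ := q.map (↑)
  have hQ : Q.IsHermitian := (isHermitian_iff_isSymm.mpr hq).map _ fun _ => by simp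
  have hN : (k • (1 + Θ * Θᴴ)).PosDef :=
    (PosDef.one.add_posSemidef (posSemidef_self_mul_conjTranspose Θ)).smul hk
  convert det_isHermitian_add_I_smul_posDef_ne_zero (hQ.smul (IsSelfAdjoint.all (-lam))) hN
    using 2
  rw [← Complex.coe_smul, ← Complex.coe_smul, Matrix.mul_neg, Matrix.smul_mul]
  module
end

section
/- With the matrix $\mathcal{A}(k)$ as above and $\lambda \ne 0$, suppose additionally that the symmetric matrix $(q_{ij})_{i,j\le m}$ is invertible. For $i \le m$ let $\mathbf{a}_i(k)$ be the vector with entries $\lambda q_{ji} + ik\,\delta_{ij}$ in positions $j \le m$ and $\theta_{ij}$ in positions $j > m$, and for $i > m$ the vector with entries $ik\,\theta_{ji}$ in positions $j \le m$, $-\delta_{ij}$ in positions $j > m$. Define $T_{ij}(k) = \det\mathcal{A}_{ij}(k)/\det\mathcal{A}(k)$, where $\mathcal{A}_{ij}(k)$ is $\mathcal{A}(k)$ with $j$-th column replaced by $\mathbf{a}_i(k)$. Then $\lim_{k \to 0^+} T_{ij}(k) = -\delta_{ij}$ for all $i, j \in \{1,\dots,n\}$. -/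
open Filter Set

/-- The right-hand side vector `𝐚ᵢ(k)` of the scattering system. -/
def scatRHS (m n : ℕ) (θ : Fin m → Fin n → ℝ) (q : Matrix (Fin m) (Fin m) ℝ)
    (lam k : ℝ) (i : Fin n) : Fin n → ℂ := fun j =>
  if hi : (i : ℕ) < m then
    if hj : (j : ℕ) < m then
      (lam : ℂ) * (q ⟨j, hj⟩ ⟨i, hi⟩ : ℝ) + Complex.I * k * (if i = j then 1 else 0)
    else ((θ ⟨i, hi⟩ j : ℝ) : ℂ)
  else
    if hj : (j : ℕ) < m then Complex.I * k * (θ ⟨j, hj⟩ i : ℝ)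
    else -(if i = j then 1 else 0)

/-- The scattering amplitude `Tᵢⱼ(k) = det 𝒜ᵢⱼ(k) / det 𝒜(k)` by Cramer's rule. -/
noncomputable def scatT (m n : ℕ) (θ : Fin m → Fin n → ℝ) (q : Matrix (Fin m) (Fin m) ℝ)
    (lam k : ℝ) (i j : Fin n) : ℂ :=
  ((scatA m n θ q lam k).updateCol j (scatRHS m n θ q lam k i)).det /
    (scatA m n θ q lam k).det

/-!
At `k = 0` the vector `𝐚ᵢ(0)` is minus the `i`-th column of `𝒜(0)`, so Cramer's rule gives
`Tᵢⱼ(0) = -δᵢⱼ`. Moreover `𝒜(0)` is block lower triangular with diagonal blocks `-λ q` and `1`,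
so `det 𝒜(0) = (-λ)ᵐ det q ≠ 0`, and `T` is continuous at `0` as a quotient of determinants
of continuous matrix families.
-/

open Matrix

theorem Matrix.det_updateCol_transpose_apply {ι R : Type*} [Fintype ι] [DecidableEq ι]
    [CommRing R] (A : Matrix ι ι R) (i j : ι) :
    (A.updateCol j (Aᵀ i)).det = if i = j then A.det else 0 := by
  simpa [← cramer_apply, Pi.single_apply, eq_comm] using
    congrFun (Aᵀ.cramer_transpose_row_self i) j

theorem Matrix.det_updateCol_neg_transpose_div_det {ι K : Type*} [Fintype ι] [DecidableEq ι]
    [Field K] {A : Matrix ι ι K} (hA : A.det ≠ 0) (i j : ι) :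
    (A.updateCol j (-Aᵀ i)).det / A.det = if i = j then -1 else 0 := by
  rw [← neg_one_smul K (Aᵀ i), det_updateCol_smul, det_updateCol_transpose_apply]
  split_ifs <;> simp [hA]

section Scattering

variable (m n : ℕ) (θ : Fin m → Fin n → ℝ) (q : Matrix (Fin m) (Fin m) ℝ) (lam : ℝ)

theorem continuous_scatA : Continuous fun k => scatA m n θ q lam k := by
  refine continuous_pi fun i => continuous_pi fun j => ?_
  simp only [scatA, of_apply]
  split_ifs <;> fun_prop

theorem continuous_scatRHS (i : Fin n) : Continuous fun k => scatRHS m n θ q lam k i := by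
  refine continuous_pi fun j => ?_
  simp only [scatRHS]
  split_ifs <;> fun_prop

theorem scatRHS_zero (i : Fin n) :
    scatRHS m n θ q lam 0 i = -(scatA m n θ q lam 0)ᵀ i := by
  ext j
  simp only [scatRHS, scatA, Pi.neg_apply, transpose_apply, of_apply,
    Complex.ofReal_zero, mul_zero, zero_mul]
  split_ifs <;> grind

theorem det_scatA_zero (hmn : m ≤ n) :
    (scatA m n θ q lam 0).det = (-(lam : ℂ)) ^ m * (q.det : ℂ) := by
  rw [twoBlockTriangular_det' _ (fun i : Fin n => (i : ℕ) < m)]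
  · have hlow : toSquareBlockProp (scatA m n θ q lam 0) (fun i => ¬(i : ℕ) < m) = 1 := by
      ext ⟨a, ha⟩ ⟨b, hb⟩
      simp [toSquareBlockProp, scatA, ha, hb, one_apply, Subtype.ext_iff]
    have hup : (toSquareBlockProp (scatA m n θ q lam 0) (fun i => (i : ℕ) < m)).submatrix
        (Fin.castLEquiv hmn) (Fin.castLEquiv hmn) = -(lam : ℂ) • q.map Complex.ofRealHom := by
      ext a b
      simp [toSquareBlockProp, scatA]
    rw [hlow, det_one, mul_one, ← det_submatrix_equiv_self (Fin.castLEquiv hmn), hup, det_smul,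
      Fintype.card_fin]
    exact congrArg _ (Complex.ofRealHom.map_det q).symm
  · intro i hi j hj
    simp [scatA, hi, hj]

theorem continuousAt_scatT {k₀ : ℝ} (hdet : (scatA m n θ q lam k₀).det ≠ 0) (i j : Fin n) :
    ContinuousAt (fun k => scatT m n θ q lam k i j) k₀ :=
  have hnum := ((continuous_scatA m n θ q lam).matrix_updateCol j
    (continuous_scatRHS m n θ q lam i)).matrix_det
  hnum.continuousAt.div (continuous_scatA m n θ q lam).matrix_det.continuousAt hdet

end Scattering

theorem stmt_11_general (m n : ℕ) (hmn : m ≤ n) (θ : Fin m → Fin n → ℝ)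
    (q : Matrix (Fin m) (Fin m) ℝ) (hqinv : IsUnit q.det)
    (lam : ℝ) (hlam : lam ≠ 0) (i j : Fin n) :
    Tendsto (fun k => scatT m n θ q lam k i j) (nhdsWithin 0 (Set.Ioi (0:ℝ)))
      (nhds (if i = j then -1 else 0)) := by
  have hdet : (scatA m n θ q lam 0).det ≠ 0 := by
    rw [det_scatA_zero m n θ q lam hmn]
    exact mul_ne_zero (pow_ne_zero _ (neg_ne_zero.2 (Complex.ofReal_ne_zero.2 hlam)))
      (Complex.ofReal_ne_zero.2 hqinv.ne_zero)
  have hval : scatT m n θ q lam 0 i j = if i = j then -1 else 0 := by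
    rw [scatT, scatRHS_zero]
    exact det_updateCol_neg_transpose_div_det hdet i j
  exact hval ▸ (continuousAt_scatT m n θ q lam hdet i j).tendsto.mono_left nhdsWithin_le_nhds

/-- if `λ ≠ 0` and `(qᵢⱼ)` is symmetric and invertible, then the on-shell
scattering matrix of the limit operator tends to `-I` as `k → 0⁺`:
`Tᵢⱼ(k) → -δᵢⱼ`. -/
theorem stmt_11 (m n : ℕ) (hmn : m ≤ n) (θ : Fin m → Fin n → ℝ)
    (q : Matrix (Fin m) (Fin m) ℝ) (hq : q.IsSymm) (hqinv : IsUnit q.det)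
    (lam : ℝ) (hlam : lam ≠ 0) (i j : Fin n) :
    Tendsto (fun k => scatT m n θ q lam k i j) (nhdsWithin 0 (Set.Ioi (0:ℝ)))
      (nhds (if i = j then -1 else 0)) :=
  stmt_11_general m n hmn θ q hqinv lam hlam i j
end

section
/- Let $m < n$ and suppose for each $i \in \{1, \dots, m+1\}$ there is a nonzero function $z_i \in H^2(0, a_i)$ solving $-z_i'' + Q_i z_i = 0$ on $(0, a_i)$ with $z_i(0) = 0$ and $z_i'(a_i) = 0$ (with bounded measurable potentials $Q_i$). For $i \le m$ define the function $\psi_i$ on the star graph $\Omega$ with edges $\omega_1,\dots,\omega_n$ by $\psi_i = z_{m+1}'(0)\, z_i$ on $\omega_i$, $\psi_i = -z_i'(0)\, z_{m+1}$ on $\omega_{m+1}$, and $\psi_i = 0$ on all other edges. Then each $\psi_i$ is continuous at the central vertex (all edge values there are $0$), satisfies the Kirchhoff derivative condition $\sum_j \frac{d\psi_i}{d\omega_j}(0) = 0$ at the central vertex and Neumann conditions at the outer vertices, solves $-\psi_i'' + Q \psi_i = 0$ edgewise, and the functions $\psi_1, \dots, \psi_m$ are linearly independent. -/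
/-!
On every edge `ψᵢ` is a constant multiple of `z_j` (or zero), so it solves the edge problem;
the two coefficients are chosen so that the outward derivatives on `ωᵢ` and `ω_{m+1}` cancel
in the Kirchhoff sum. By uniqueness for the initial value problem (Grönwall), `z_{m+1}'(0) ≠ 0`,
so `ψᵢ` is nonzero on `ωᵢ`, where every other `ψ_k` vanishes: this gives linear independence.
-/

open Set

section InitialValueProblem

variable {Q z z' z'' : ℝ → ℝ} {b : ℝ}

theorem eqOn_zero_of_ode_of_initial_eq_zero {M : ℝ} (hM : ∀ x ∈ Icc 0 b, |Q x| ≤ M)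
    (hz : ∀ x ∈ Icc 0 b, HasDerivAt z (z' x) x)
    (hz' : ∀ x ∈ Icc 0 b, HasDerivAt z' (z'' x) x)
    (heq : ∀ x ∈ Icc 0 b, -z'' x + Q x * z x = 0)
    (h0 : z 0 = 0) (h0' : z' 0 = 0) : EqOn z 0 (Icc 0 b) := by
  have hd : ∀ x ∈ Icc 0 b, HasDerivAt (fun y => (z y, z' y)) (z' x, z'' x) x :=
    fun x hx => (hz x hx).prodMk (hz' x hx)
  have hK : 1 ≤ max 1 M := le_max_left _ _
  have hbound : ∀ x ∈ Ico 0 b, ‖(z' x, z'' x)‖ ≤ max 1 M * ‖(z x, z' x)‖ := by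
    intro x hx
    have hz'' : z'' x = Q x * z x := by linarith [heq x (Ico_subset_Icc_self hx)]
    simp only [Prod.norm_def, Real.norm_eq_abs, hz'', abs_mul]
    have hnorm : 0 ≤ max |z x| |z' x| := (abs_nonneg _).trans (le_max_left _ _)
    refine max_le ?_ ?_
    · exact (le_max_right _ _).trans (le_mul_of_one_le_left hnorm hK)
    · exact mul_le_mul ((hM x (Ico_subset_Icc_self hx)).trans (le_max_right _ _))
        (le_max_left _ _) (abs_nonneg _) (zero_le_one.trans hK)
  intro x hx
  exact congrArg Prod.fst <| eq_zero_of_abs_deriv_le_mul_abs_self_of_eq_zero_right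
    (fun x hx => (hd x hx).continuousAt.continuousWithinAt)
    (fun x hx => (hd x (Ico_subset_Icc_self hx)).hasDerivWithinAt)
    (by simp [h0, h0']) hbound x hx

theorem deriv_zero_ne_zero_of_ode {M : ℝ} (hM : ∀ x ∈ Icc 0 b, |Q x| ≤ M)
    (hz : ∀ x ∈ Icc 0 b, HasDerivAt z (z' x) x)
    (hz' : ∀ x ∈ Icc 0 b, HasDerivAt z' (z'' x) x)
    (heq : ∀ x ∈ Icc 0 b, -z'' x + Q x * z x = 0)
    (h0 : z 0 = 0) (hnz : ∃ x ∈ Icc 0 b, z x ≠ 0) : z' 0 ≠ 0 := fun h0' => by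
  obtain ⟨x, hx, hne⟩ := hnz
  exact hne (eqOn_zero_of_ode_of_initial_eq_zero hM hz hz' heq h0 h0' hx)

end InitialValueProblem

structure IsDirichletNeumannSolution (Q : ℝ → ℝ) (b : ℝ)
    (z z' z'' : ℝ → ℝ) : Prop where
  hasDerivAt : ∀ x ∈ Icc 0 b, HasDerivAt z (z' x) x
  hasDerivAt_deriv : ∀ x ∈ Icc 0 b, HasDerivAt z' (z'' x) x
  ode : ∀ x ∈ Icc 0 b, -z'' x + Q x * z x = 0
  map_zero : z 0 = 0
  deriv_right : z' b = 0

namespace IsDirichletNeumannSolution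

variable {Q z z' z'' : ℝ → ℝ} {b : ℝ}

theorem zero : IsDirichletNeumannSolution Q b 0 0 0 where
  hasDerivAt x _ := hasDerivAt_const x 0
  hasDerivAt_deriv x _ := hasDerivAt_const x 0
  ode _ _ := by simp
  map_zero := rfl
  deriv_right := rfl

theorem const_mul (h : IsDirichletNeumannSolution Q b z z' z'') (k : ℝ) :
    IsDirichletNeumannSolution Q b (fun x => k * z x) (fun x => k * z' x) (fun x => k * z'' x)
    where
  hasDerivAt x hx := (h.hasDerivAt x hx).const_mul k
  hasDerivAt_deriv x hx := (h.hasDerivAt_deriv x hx).const_mul k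
  ode x hx := by linear_combination k * h.ode x hx
  map_zero := by simp [h.map_zero]
  deriv_right := by simp [h.deriv_right]

end IsDirichletNeumannSolution

section PairCombination

variable {E : Type*} [DecidableEq E] {X R : Type*} [Ring R]

def pairCombination (e c : E) (α β : R) (f : E → X → R) : E → X → R :=
  fun j x => if j = e then α * f j x else if j = c then β * f j x else 0

variable {e c : E} {α β : R} {f : E → X → R}

theorem pairCombination_left : pairCombination e c α β f e = fun x => α * f e x :=
  funext fun _ => if_pos rfl

theorem pairCombination_right (hec : e ≠ c) :
    pairCombination e c α β f c = fun x => β * f c x :=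
  funext fun _ => by simp [pairCombination, hec.symm]

theorem pairCombination_of_ne {j : E} (hje : j ≠ e) (hjc : j ≠ c) :
    pairCombination e c α β f j = 0 :=
  funext fun _ => by simp [pairCombination, hje, hjc]

theorem sum_pairCombination [Fintype E] (hec : e ≠ c) (x : X) :
    ∑ j, pairCombination e c α β f j x = α * f e x + β * f c x := by
  rw [Fintype.sum_eq_add e c hec fun j hj => congrFun (pairCombination_of_ne hj.1 hj.2) x,
    pairCombination_left, pairCombination_right hec]

theorem isDirichletNeumannSolution_pairCombination {Q : E → ℝ → ℝ} {a : E → ℝ}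
    {z z' z'' : E → ℝ → ℝ} {α β : ℝ} (hec : e ≠ c)
    (he : IsDirichletNeumannSolution (Q e) (a e) (z e) (z' e) (z'' e))
    (hc : IsDirichletNeumannSolution (Q c) (a c) (z c) (z' c) (z'' c)) (j : E) :
    IsDirichletNeumannSolution (Q j) (a j) (pairCombination e c α β z j)
      (pairCombination e c α β z' j) (pairCombination e c α β z'' j) := by
  by_cases hje : j = e
  · subst hje
    simpa only [pairCombination_left] using he.const_mul α
  by_cases hjc : j = c
  · subst hjc
    simpa only [pairCombination_right hec] using hc.const_mul β
  simpa only [pairCombination_of_ne hje hjc] using IsDirichletNeumannSolution.zero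

end PairCombination

theorem linearIndependent_of_eval_diagonal {ι E X K : Type*} [Field K] {ψ : ι → E → X → K}
    (e : ι → E) (x : ι → X) (hoff : Pairwise fun i i' => ψ i' (e i) (x i) = 0)
    (hdiag : ∀ i, ψ i (e i) (x i) ≠ 0) : LinearIndependent K ψ := by
  let ev : ι → Module.Dual K (E → X → K) := fun i =>
    (ψ i (e i) (x i))⁻¹ •
      (LinearMap.proj (R := K) (x i) ∘ₗ LinearMap.proj (φ := fun _ : E => X → K) (e i))
  refine .of_pairwise_dual_eq_zero_one ψ ev (fun i i' hii' => ?_) fun i => ?_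
  · simp [ev, hoff hii']
  · simp [ev, hdiag i]

theorem stmt_16_general (n m : ℕ) (hm : m < n) (a : Fin n → ℝ)
    (Q : Fin n → ℝ → ℝ)
    (hQbdd : ∀ j : Fin n, ∃ M, ∀ x ∈ Set.Icc 0 (a j), |Q j x| ≤ M)
    (z z' z'' : Fin n → ℝ → ℝ)
    (hz : ∀ j : Fin n, (j : ℕ) ≤ m → ∀ x ∈ Set.Icc 0 (a j), HasDerivAt (z j) (z' j x) x)
    (hz' : ∀ j : Fin n, (j : ℕ) ≤ m → ∀ x ∈ Set.Icc 0 (a j), HasDerivAt (z' j) (z'' j x) x)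
    (heq : ∀ j : Fin n, (j : ℕ) ≤ m →
      ∀ x ∈ Set.Icc 0 (a j), -z'' j x + Q j x * z j x = 0)
    (h0 : ∀ j : Fin n, (j : ℕ) ≤ m → z j 0 = 0)
    (hNeu : ∀ j : Fin n, (j : ℕ) ≤ m → z' j (a j) = 0)
    (hnz : ∀ j : Fin n, (j : ℕ) ≤ m → ∃ x ∈ Set.Icc 0 (a j), z j x ≠ 0) :
    let c : Fin n := ⟨m, hm⟩
    let ψ : Fin m → Fin n → ℝ → ℝ := fun i j x =>
      if j = Fin.castLE hm.le i then z' c 0 * z j x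
      else if j = c then -(z' (Fin.castLE hm.le i) 0) * z j x
      else 0
    ∃ ψ' ψ'' : Fin m → Fin n → ℝ → ℝ,
      (∀ i j, ∀ x ∈ Set.Icc 0 (a j),
        HasDerivAt (ψ i j) (ψ' i j x) x ∧ HasDerivAt (ψ' i j) (ψ'' i j x) x) ∧
      (∀ i j, ψ i j 0 = 0) ∧
      (∀ i, (∑ j : Fin n, ψ' i j 0) = 0) ∧
      (∀ i j, ψ' i j (a j) = 0) ∧
      (∀ i j, ∀ x ∈ Set.Icc 0 (a j), -ψ'' i j x + Q j x * ψ i j x = 0) ∧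
      LinearIndependent ℝ ψ := by
  intro c ψ
  set e : Fin m → Fin n := Fin.castLE hm.le
  have hec : ∀ i, e i ≠ c := fun i h => i.isLt.ne (congrArg Fin.val h)
  have hsol : ∀ j : Fin n, (j : ℕ) ≤ m →
      IsDirichletNeumannSolution (Q j) (a j) (z j) (z' j) (z'' j) :=
    fun j hj => ⟨hz j hj, hz' j hj, heq j hj, h0 j hj, hNeu j hj⟩
  have hslope : z' c 0 ≠ 0 := by
    obtain ⟨M, hM⟩ := hQbdd c
    exact deriv_zero_ne_zero_of_ode hM (hz c le_rfl) (hz' c le_rfl) (heq c le_rfl) (h0 c le_rfl)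
      (hnz c le_rfl)
  -- `ψ i` is `pairCombination (e i) c (z' c 0) (-z' (e i) 0) z` definitionally.
  have hψ : ∀ i j, IsDirichletNeumannSolution (Q j) (a j) (ψ i j)
      (pairCombination (e i) c (z' c 0) (-z' (e i) 0) z' j)
      (pairCombination (e i) c (z' c 0) (-z' (e i) 0) z'' j) := fun i =>
    isDirichletNeumannSolution_pairCombination (hec i) (hsol _ i.isLt.le) (hsol c le_rfl)
  refine ⟨fun i => pairCombination (e i) c (z' c 0) (-z' (e i) 0) z',
    fun i => pairCombination (e i) c (z' c 0) (-z' (e i) 0) z'',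
    fun i j x hx => ⟨(hψ i j).hasDerivAt x hx, (hψ i j).hasDerivAt_deriv x hx⟩,
    fun i j => (hψ i j).map_zero, fun i => ?_, fun i j => (hψ i j).deriv_right,
    fun i j => (hψ i j).ode, ?_⟩
  · rw [sum_pairCombination (hec i)]
    ring
  · choose x _ hzx using fun i => hnz (e i) i.isLt.le
    refine linearIndependent_of_eval_diagonal e x (fun i i' hii' => ?_) fun i => ?_
    · exact congrFun (pairCombination_of_ne (fun h => hii' (Fin.castLE_injective _ h)) (hec i)) _
    · exact (congrFun pairCombination_left (x i)).trans_ne (mul_ne_zero hslope (hzx i))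

/-- constructive direction of the Proposition of Section 3. If each of the
`m+1` single-edge problems `-z'' + Qz = 0`, `z(0) = 0`, `z'(aᵢ) = 0` (edges `ω₁,…,ω_{m+1}`
of the star graph `Ω`, with bounded measurable potentials) has a nontrivial solution `zᵢ`,
then the glued functions `ψᵢ := z'_{m+1}(0) zᵢ` on `ωᵢ`, `-z'ᵢ(0) z_{m+1}` on `ω_{m+1}`,
`0` elsewhere, vanish at the central vertex, satisfy the Kirchhoff condition there,
Neumann conditions at the outer vertices, solve `-ψ'' + Qψ = 0` edgewise, and are
linearly independent. -/
theorem stmt_16 (n m : ℕ) (hm : m < n) (a : Fin n → ℝ) (ha : ∀ j, 0 < a j)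
    (Q : Fin n → ℝ → ℝ)
    (hQmeas : ∀ j : Fin n, Measurable (Q j))
    (hQbdd : ∀ j : Fin n, ∃ M, ∀ x ∈ Set.Icc 0 (a j), |Q j x| ≤ M)
    (z z' z'' : Fin n → ℝ → ℝ)
    (hz : ∀ j : Fin n, (j : ℕ) ≤ m → ∀ x ∈ Set.Icc 0 (a j), HasDerivAt (z j) (z' j x) x)
    (hz' : ∀ j : Fin n, (j : ℕ) ≤ m → ∀ x ∈ Set.Icc 0 (a j), HasDerivAt (z' j) (z'' j x) x)
    (heq : ∀ j : Fin n, (j : ℕ) ≤ m →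
      ∀ x ∈ Set.Icc 0 (a j), -z'' j x + Q j x * z j x = 0)
    (h0 : ∀ j : Fin n, (j : ℕ) ≤ m → z j 0 = 0)
    (hNeu : ∀ j : Fin n, (j : ℕ) ≤ m → z' j (a j) = 0)
    (hnz : ∀ j : Fin n, (j : ℕ) ≤ m → ∃ x ∈ Set.Icc 0 (a j), z j x ≠ 0) :
    let c : Fin n := ⟨m, hm⟩
    let ψ : Fin m → Fin n → ℝ → ℝ := fun i j x =>
      if j = Fin.castLE hm.le i then z' c 0 * z j x
      else if j = c then -(z' (Fin.castLE hm.le i) 0) * z j x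
      else 0
    ∃ ψ' ψ'' : Fin m → Fin n → ℝ → ℝ,
      (∀ i j, ∀ x ∈ Set.Icc 0 (a j),
        HasDerivAt (ψ i j) (ψ' i j x) x ∧ HasDerivAt (ψ' i j) (ψ'' i j x) x) ∧
      (∀ i j, ψ i j 0 = 0) ∧
      (∀ i, (∑ j : Fin n, ψ' i j 0) = 0) ∧
      (∀ i j, ψ' i j (a j) = 0) ∧
      (∀ i j, ∀ x ∈ Set.Icc 0 (a j), -ψ'' i j x + Q j x * ψ i j x = 0) ∧
      LinearIndependent ℝ ψ :=
  stmt_16_general n m hm a Q hQbdd z z' z'' hz hz' heq h0 hNeu hnz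
end
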